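/- Suppose in addition that [𝔔]_R = {𝔔} is a singleton (there is a unique fittest strategy). Let (μ(t))_{t≥0} be a solution of the pure selection model with 𝔔 ∈ supp(μ(0)). Then μ(t) → K_𝔔 δ_𝔔 as t → ∞ in the weak* topology, i.e., for every continuous f : Q → ℝ, ∫_Q f dμ(t) → K_𝔔 f(𝔔). -/

import Mathlib

open MeasureTheory Filter Set Topology

noncomputable section

/-- Birth and mortality rates `f₁`, `f₂` on `ℝ × Q` satisfying assumptions (A1)-(A2). -/
structure EGTRates (Q : Type*) [MetricSpace Q] where
  f₁ : ℝ → Q → ℝ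
  f₂ : ℝ → Q → ℝ
  f₁_nonneg : ∀ X q, 0 ≤ f₁ X q
  f₂_nonneg : ∀ X q, 0 ≤ f₂ X q
  f₁_lip : ∀ C : ℝ, ∃ L : ℝ, 0 ≤ L ∧ ∀ q : Q, ∀ X ∈ Set.Icc (-C) C, ∀ Y ∈ Set.Icc (-C) C,
    |f₁ X q - f₁ Y q| ≤ L * |X - Y|
  f₂_lip : ∀ C : ℝ, ∃ L : ℝ, 0 ≤ L ∧ ∀ q : Q, ∀ X ∈ Set.Icc (-C) C, ∀ Y ∈ Set.Icc (-C) C,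
    |f₂ X q - f₂ Y q| ≤ L * |X - Y|
  f₁_anti : ∀ q, AntitoneOn (fun X => f₁ X q) (Set.Ici 0)
  f₂_mono : ∀ q, MonotoneOn (fun X => f₂ X q) (Set.Ici 0)
  f₁_cont : ∀ X, Continuous fun q => f₁ X q
  f₂_cont : ∀ X, Continuous fun q => f₂ X q
  f₂_inf_pos : ∃ ϖ : ℝ, 0 < ϖ ∧ ∀ q, ϖ ≤ f₂ 0 q

namespace EGTRates

variable {Q : Type*} [MetricSpace Q]

/-- The reproductive number `R(X,q) = f₁(X,q)/f₂(X,q)`. -/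
def R (M : EGTRates Q) (X : ℝ) (q : Q) : ℝ := M.f₁ X q / M.f₂ X q

/-- The carrying capacity `K(q)`. -/
def carCap (M : EGTRates Q) (q : Q) : ℝ :=
  if 1 ≤ M.R 0 q then sInf {K : ℝ | 0 ≤ K ∧ M.R K q ≤ 1} else 0

/-- Assumptions (A3)-(A5) relative to a fittest strategy `𝔔` and a least fit strategy `𝔮`. -/
def Assumptions (M : EGTRates Q) (𝔔 𝔮 : Q) : Prop :=
  (∀ q, M.R 0 q ≤ M.R 0 𝔔) ∧ (∀ q, M.R 0 𝔮 ≤ M.R 0 q) ∧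
  (∃ X, 0 ≤ X ∧ M.R X 𝔔 ≤ 1) ∧
  (∀ q qq : Q, ∀ Y : ℝ, 0 ≤ Y →
      (M.R 0 qq < M.R 0 q → M.R Y qq < M.R Y q) ∧
      (M.R 0 q = M.R 0 qq → M.R Y q = M.R Y qq)) ∧
  (1 ≤ M.R 0 𝔔 → M.R (M.carCap 𝔔) 𝔔 = 1 ∧ ∀ x, 0 ≤ x → M.R x 𝔔 = 1 → x = M.carCap 𝔔) ∧
  (1 ≤ M.R 0 𝔮 → M.R (M.carCap 𝔮) 𝔮 = 1 ∧ ∀ x, 0 ≤ x → M.R x 𝔮 = 1 → x = M.carCap 𝔮)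

/-- The class of fittest strategies `[𝔔]_R`. -/
def fittestClass (M : EGTRates Q) (𝔔 : Q) : Set Q := {q | M.R 0 q = M.R 0 𝔔}

end EGTRates

/-- Support of a Borel measure: points all of whose neighborhoods have positive measure. -/
def msupport {Q : Type*} [MetricSpace Q] [MeasurableSpace Q] (μ : Measure Q) : Set Q :=
  {q | ∀ ε : ℝ, 0 < ε → 0 < μ (Metric.ball q ε)}

/-- A solution of the full selection–mutation model with mutation kernel `γ`. -/
def IsSelMutSolution {Q : Type*} [MetricSpace Q] [MeasurableSpace Q] [BorelSpace Q]
    (M : EGTRates Q) (γ : Q → ProbabilityMeasure Q) (μ : ℝ → Measure Q) : Prop :=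
  (∀ t, IsFiniteMeasure (μ t)) ∧
  ∀ t ∈ Set.Ici (0:ℝ), ∀ E : Set Q, MeasurableSet E →
    HasDerivWithinAt (fun s => (μ s E).toReal)
      ((∫ qq, M.f₁ (μ t Set.univ).toReal qq * ((γ qq : Measure Q) E).toReal ∂(μ t)) -
        ∫ qq in E, M.f₂ (μ t Set.univ).toReal qq ∂(μ t)) (Set.Ici 0) t

/-- A solution of the pure selection (replicator) model. -/
def IsPureSelectionSolution {Q : Type*} [MetricSpace Q] [MeasurableSpace Q] [BorelSpace Q]
    (M : EGTRates Q) (μ : ℝ → Measure Q) : Prop :=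
  (∀ t, IsFiniteMeasure (μ t)) ∧
  ∀ t ∈ Set.Ici (0:ℝ), ∀ E : Set Q, MeasurableSet E →
    HasDerivWithinAt (fun s => (μ s E).toReal)
      (∫ q in E, (M.f₁ (μ t Set.univ).toReal q - M.f₂ (μ t Set.univ).toReal q) ∂(μ t))
      (Set.Ici 0) t

/-!
Write `g = f₁ - f₂` for the growth rate and `X(t) = μ(t)(Q)` for the total mass, so that
`X' = ∫ g(X, ·) dμ(t)`. Since `𝔔` is fittest, `g(X, ·) < 0` everywhere as soon as `X > K_𝔔`,
hence `limsup X ≤ K_𝔔`; when `K_𝔔 = 0` this is already the claim.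

When `K_𝔔 > 0`, the mass of a small ball around `𝔔` stays bounded and grows at rate at least
`g(X, 𝔔) - δ`, so `∫₀ᵗ g(X, 𝔔) ≤ δ t + C`; moreover `g(X, 𝔔) ≥ -δ` eventually, because
`g(K_𝔔, 𝔔) = 0`. On a compact set avoiding `𝔔` the growth rate is `≤ -a < 0` once
`X ≥ K_𝔔 - η`, while below that level `g(X, 𝔔) ≥ c > 0`. So on that set it is dominated by
`-a + k max (g(X, 𝔔), 0) ≤ -a + k (g(X, 𝔔) + δ)`, whose time average is eventually `≤ -a / 2`,
and Grönwall's inequality makes the mass of the set decay exponentially. The mass near `𝔔` then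
grows exponentially as long as it is below `K_𝔔 - ε`, so `X → K_𝔔`. Total mass tending to `K_𝔔`
while concentrating at `𝔔` is weak-* convergence to `K_𝔔 δ_𝔔`.
-/

section Comparison

variable {f f' β : ℝ → ℝ} {a b B κ : ℝ}

theorem le_max_of_deriv_nonpos_of_lt (hf : ContinuousOn f (Ici a))
    (hf' : ∀ t ∈ Ici a, HasDerivWithinAt f (f' t) (Ici t) t)
    (hb : ∀ t ∈ Ici a, b < f t → f' t ≤ 0) : ∀ t ∈ Ici a, f t ≤ max (f a) b := by
  intro t ht
  refine le_of_forall_pos_le_add fun δ hδ => ?_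
  have hlen : 0 < 1 + (t - a) := by linarith [show a ≤ t from ht]
  set ε := δ / (1 + (t - a))
  have hε : 0 < ε := div_pos hδ hlen
  -- a fence rising at rate `ε` is never reached, since above `b` the function is nonincreasing
  have fence := image_le_of_deriv_right_lt_deriv_boundary (a := a) (b := t)
    (hf.mono Icc_subset_Ici_self) (fun x hx => hf' x hx.1)
    (B := fun x => max (f a) b + ε * (1 + (x - a))) (B' := fun _ => ε)
    (by nlinarith [le_max_left (f a) b])
    (fun x => by
      simpa using ((((hasDerivAt_id x).sub_const a).const_add 1).const_mul ε).const_add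
        (max (f a) b))
    (fun x hx hfx => by
      have : b < f x := by
        rw [hfx]
        nlinarith [le_max_right (f a) b, hx.1]
      linarith [hb x hx.1 this])
    (right_mem_Icc.2 ht)
  calc f t ≤ max (f a) b + ε * (1 + (t - a)) := fence
    _ = max (f a) b + δ := by rw [div_mul_cancel₀ _ hlen.ne']

theorem min_le_of_deriv_nonneg_of_lt (hf : ContinuousOn f (Ici a))
    (hf' : ∀ t ∈ Ici a, HasDerivWithinAt f (f' t) (Ici t) t)
    (hb : ∀ t ∈ Ici a, f t < b → 0 ≤ f' t) : ∀ t ∈ Ici a, min (f a) b ≤ f t := by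
  intro t ht
  have := le_max_of_deriv_nonpos_of_lt (f := fun s => -f s) hf.neg (fun s hs => (hf' s hs).neg)
    (b := -b) (fun s hs h => neg_nonpos.2 (hb s hs (neg_lt_neg_iff.1 h))) t ht
  rw [max_neg_neg] at this
  linarith

theorem le_mul_exp_integral_of_deriv_le (hf : ContinuousOn f (Ici a))
    (hf' : ∀ t ∈ Ici a, HasDerivWithinAt f (f' t) (Ici t) t) (hβ : ContinuousOn β (Ici a))
    (bound : ∀ t ∈ Ici a, f' t ≤ β t * f t) :
    ∀ t ∈ Ici a, f t ≤ f a * Real.exp (∫ s in a..t, β s) := by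
  intro t ht
  -- extend `β` continuously to the left of `a` to have a primitive on all of `ℝ`
  set β₀ : ℝ → ℝ := fun s => β (max s a)
  have hβ₀ : Continuous β₀ :=
    hβ.comp_continuous (continuous_id.max continuous_const) fun s => le_max_right s a
  have hβ₀_eq : ∀ s ∈ Ici a, β₀ s = β s := fun s hs => by
    simp only [β₀, max_eq_left (mem_Ici.1 hs)]
  set I : ℝ → ℝ := fun x => ∫ s in a..x, β₀ s
  have hI : ∀ x, HasDerivAt I (β₀ x) x := fun x => (hβ₀.integral_hasStrictDerivAt a x).hasDerivAt
  have hIt : I t = ∫ s in a..t, β s :=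
    intervalIntegral.integral_congr fun s hs => hβ₀_eq s (by rw [uIcc_of_le ht] at hs; exact hs.1)
  -- `f * exp (-I)` is nonincreasing
  have hIc : Continuous I := continuous_iff_continuousAt.2 fun x => (hI x).continuousAt
  have hdecr := image_le_of_deriv_right_le_deriv_boundary (a := a) (b := t)
    (f := fun x => f x * Real.exp (-I x))
    ((hf.mono Icc_subset_Ici_self).mul (Real.continuous_exp.comp hIc.neg).continuousOn)
    (fun x hx => (hf' x hx.1).mul ((hI x).neg.exp.hasDerivWithinAt))
    (B := fun _ => f a * Real.exp (-I a)) (B' := fun _ => 0) le_rfl continuousOn_const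
    (fun x _ => hasDerivWithinAt_const _ _ _)
    (fun x hx => by
      have := bound x hx.1
      rw [hβ₀_eq x hx.1, Pi.neg_apply]
      nlinarith [mul_le_mul_of_nonneg_left this (Real.exp_pos (-I x)).le])
    (right_mem_Icc.2 ht)
  have hIa : I a = 0 := intervalIntegral.integral_same
  simp only [hIa, neg_zero, Real.exp_zero, mul_one] at hdecr
  calc f t = f t * Real.exp (-I t) * Real.exp (I t) := by
        rw [mul_assoc, ← Real.exp_add, neg_add_cancel, Real.exp_zero, mul_one]
    _ ≤ f a * Real.exp (I t) := by gcongr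
    _ = f a * Real.exp (∫ s in a..t, β s) := by rw [hIt]

theorem mul_exp_integral_le_of_le_deriv (hf : ContinuousOn f (Ici a))
    (hf' : ∀ t ∈ Ici a, HasDerivWithinAt f (f' t) (Ici t) t) (hβ : ContinuousOn β (Ici a))
    (bound : ∀ t ∈ Ici a, β t * f t ≤ f' t) :
    ∀ t ∈ Ici a, f a * Real.exp (∫ s in a..t, β s) ≤ f t := by
  intro t ht
  have := le_mul_exp_integral_of_deriv_le (f := fun s => -f s) hf.neg
    (fun s hs => (hf' s hs).neg) hβ (fun s hs => by simpa using bound s hs) t ht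
  linarith

theorem eventually_le_of_deriv_le_neg_mul (hf : ContinuousOn f (Ici a))
    (hf' : ∀ t ∈ Ici a, HasDerivWithinAt f (f' t) (Ici t) t) (hb : 0 < b) (hκ : 0 < κ)
    (bound : ∀ t ∈ Ici a, b ≤ f t → f' t ≤ -κ * f t) : ∀ᶠ t in atTop, f t ≤ b := by
  obtain ⟨t₀, ht₀, hft₀⟩ : ∃ t₀ ∈ Ici a, f t₀ ≤ b := by
    by_contra! habove
    have hdecay := le_mul_exp_integral_of_deriv_le hf hf' continuousOn_const
      fun t ht => bound t ht (habove t ht).le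
    have hlim : Tendsto (fun t => f a * Real.exp (∫ _ in a..t, -κ)) atTop (𝓝 0) := by
      simp only [intervalIntegral.integral_const, smul_eq_mul]
      simpa [sub_eq_add_neg] using (Real.tendsto_exp_atBot.comp
        ((tendsto_atTop_add_const_right _ (-a) tendsto_id).atTop_mul_const_of_neg
          (neg_lt_zero.2 hκ))).const_mul (f a)
    obtain ⟨t, hsmall, hta⟩ :=
      ((hlim.eventually (gt_mem_nhds hb)).and (eventually_ge_atTop a)).exists
    linarith [habove t hta, hdecay t hta]
  filter_upwards [eventually_ge_atTop t₀] with t ht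
  have := le_max_of_deriv_nonpos_of_lt (hf.mono (Ici_subset_Ici.2 ht₀))
    (fun s hs => hf' s (Ici_subset_Ici.2 ht₀ hs)) (b := b)
    (fun s hs hbs => (bound s (Ici_subset_Ici.2 ht₀ hs) hbs.le).trans (by nlinarith)) t ht
  rwa [max_eq_right hft₀] at this

theorem eventually_ge_of_mul_le_deriv (hf : ContinuousOn f (Ici a))
    (hf' : ∀ t ∈ Ici a, HasDerivWithinAt f (f' t) (Ici t) t) (hpos : ∀ t ∈ Ici a, 0 < f t)
    (hbdd : ∀ t ∈ Ici a, f t ≤ B) (hκ : 0 < κ)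
    (bound : ∀ t ∈ Ici a, f t ≤ b → κ * f t ≤ f' t) : ∀ᶠ t in atTop, b ≤ f t := by
  obtain ⟨t₀, ht₀, hft₀⟩ : ∃ t₀ ∈ Ici a, b ≤ f t₀ := by
    by_contra! hbelow
    have hgrowth := mul_exp_integral_le_of_le_deriv hf hf' continuousOn_const
      fun t ht => bound t ht (hbelow t ht).le
    have hlim : Tendsto (fun t => f a * Real.exp (∫ _ in a..t, κ)) atTop atTop := by
      simp only [intervalIntegral.integral_const, smul_eq_mul]
      simpa [sub_eq_add_neg] using (Real.tendsto_exp_atTop.comp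
        ((tendsto_atTop_add_const_right _ (-a) tendsto_id).atTop_mul_const hκ)).const_mul_atTop
          (hpos a (mem_Ici.2 le_rfl))
    obtain ⟨t, hlarge, hta⟩ :=
      ((hlim.eventually_gt_atTop B).and (eventually_ge_atTop a)).exists
    linarith [hbdd t hta, hgrowth t hta]
  filter_upwards [eventually_ge_atTop t₀] with t ht
  have := min_le_of_deriv_nonneg_of_lt (hf.mono (Ici_subset_Ici.2 ht₀))
    (fun s hs => hf' s (Ici_subset_Ici.2 ht₀ hs)) (b := b)
    (fun s hs hbs => le_trans (by nlinarith [hpos s (Ici_subset_Ici.2 ht₀ hs)])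
      (bound s (Ici_subset_Ici.2 ht₀ hs) hbs.le)) t ht
  rwa [min_eq_right hft₀] at this

end Comparison

theorem tendsto_integral_of_tendsto_measureReal_compl_ball {Q ι : Type*} [MetricSpace Q]
    [CompactSpace Q] [MeasurableSpace Q] [OpensMeasurableSpace Q] {l : Filter ι} {ν : ι → Measure Q}
    [∀ i, IsFiniteMeasure (ν i)] {x₀ : Q} {K : ℝ}
    (hmass : Tendsto (fun i => (ν i).real univ) l (𝓝 K))
    (hconc : ∀ ρ > 0, Tendsto (fun i => (ν i).real (Metric.ball x₀ ρ)ᶜ) l (𝓝 0))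
    {f : Q → ℝ} (hf : Continuous f) :
    Tendsto (fun i => ∫ q, f q ∂ν i) l (𝓝 (K * f x₀)) := by
  obtain ⟨C, hC⟩ := isCompact_univ.exists_bound_of_continuousOn hf.continuousOn
  have hg : Continuous fun q => f q - f x₀ := hf.sub continuous_const
  have hdev : Tendsto (fun i => ∫ q, (f q - f x₀) ∂ν i) l (𝓝 0) := by
    refine Metric.tendsto_nhds.2 fun ε hε => ?_
    have hden : 0 < |K| + 2 + 2 * C := by
      linarith [abs_nonneg K, (norm_nonneg _).trans (hC x₀ trivial)]
    set ε' := ε / (|K| + 2 + 2 * C)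
    have hε' : 0 < ε' := div_pos hε hden
    obtain ⟨ρ, hρ, hfρ⟩ := Metric.continuous_iff.1 hf x₀ ε' hε'
    filter_upwards [hmass.eventually (gt_mem_nhds (by linarith [le_abs_self K] : K < |K| + 1)),
      (hconc ρ hρ).eventually (gt_mem_nhds hε')] with i hmass_i hconc_i
    have hball : ‖∫ q in Metric.ball x₀ ρ, (f q - f x₀) ∂ν i‖ ≤ ε' * (ν i).real univ :=
      (norm_setIntegral_le_of_norm_le_const (C := ε') (measure_lt_top _ _) fun q hq =>
        (hfρ q hq).le).trans (by gcongr; exact measureReal_mono (subset_univ _))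
    have hcompl : ‖∫ q in (Metric.ball x₀ ρ)ᶜ, (f q - f x₀) ∂ν i‖ ≤ 2 * C * ε' :=
      (norm_setIntegral_le_of_norm_le_const (C := 2 * C) (measure_lt_top _ _) fun q _ =>
        (norm_sub_le _ _).trans (by linarith [hC q trivial, hC x₀ trivial])).trans
        (by gcongr; linarith [(norm_nonneg _).trans (hC x₀ trivial)])
    rw [dist_zero_right, ← integral_add_compl Metric.isOpen_ball.measurableSet
      (hg.integrable_of_hasCompactSupport (.of_compactSpace _))]
    calc _ ≤ ε' * (ν i).real univ + 2 * C * ε' :=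
          (norm_add_le _ _).trans (add_le_add hball hcompl)
      _ < ε' * (|K| + 2 + 2 * C) := by nlinarith
      _ = ε := div_mul_cancel₀ _ hden.ne'
  have hsplit : ∀ i, ∫ q, f q ∂ν i = ∫ q, (f q - f x₀) ∂ν i + (ν i).real univ * f x₀ :=
    fun i => by
      rw [integral_sub (hf.integrable_of_hasCompactSupport (.of_compactSpace _))
        (integrable_const _), integral_const, smul_eq_mul]
      ring
  simpa [hsplit] using hdev.add (hmass.mul_const (f x₀))

theorem continuous_uncurry_of_locally_lipschitz_of_continuous {α : Type*} [TopologicalSpace α]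
    {F : ℝ → α → ℝ}
    (hlip : ∀ C : ℝ, ∃ L : ℝ, 0 ≤ L ∧ ∀ q : α, ∀ X ∈ Icc (-C) C, ∀ Y ∈ Icc (-C) C,
      |F X q - F Y q| ≤ L * |X - Y|)
    (hcont : ∀ X, Continuous (F X)) : Continuous (Function.uncurry F) := by
  refine continuous_iff_continuousAt.2 fun ⟨X₀, q₀⟩ => ?_
  obtain ⟨L, hL, hLip⟩ := hlip (|X₀| + 1)
  have hon : ContinuousOn (Function.uncurry F) (Icc (-(|X₀| + 1)) (|X₀| + 1) ×ˢ univ) :=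
    continuousOn_prod_of_continuousOn_lipschitzOnWith _ (Real.toNNReal L)
      (fun X _ => (hcont X).continuousOn)
      (fun q _ => LipschitzOnWith.of_dist_le_mul fun X hX Y hY => by
        simpa [Real.dist_eq, Real.coe_toNNReal _ hL] using hLip q X hX Y hY)
  refine hon.continuousAt (prod_mem_nhds (Icc_mem_nhds ?_ ?_) univ_mem) <;>
    linarith [neg_abs_le X₀, le_abs_self X₀]

namespace EGTRates

variable {Q : Type*} [MetricSpace Q] (M : EGTRates Q) {X : ℝ} {q : Q}

def growth (X : ℝ) (q : Q) : ℝ := M.f₁ X q - M.f₂ X q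

theorem continuous_f₁ : Continuous (Function.uncurry M.f₁) :=
  continuous_uncurry_of_locally_lipschitz_of_continuous M.f₁_lip M.f₁_cont

theorem continuous_f₂ : Continuous (Function.uncurry M.f₂) :=
  continuous_uncurry_of_locally_lipschitz_of_continuous M.f₂_lip M.f₂_cont

theorem continuous_growth : Continuous (Function.uncurry M.growth) :=
  M.continuous_f₁.sub M.continuous_f₂

theorem continuous_growth_left (q : Q) : Continuous fun X => M.growth X q :=
  M.continuous_growth.comp (continuous_id.prodMk continuous_const)

theorem continuous_growth_right (X : ℝ) : Continuous (M.growth X) :=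
  (M.f₁_cont X).sub (M.f₂_cont X)

theorem exists_pos_le_f₂ : ∃ ϖ > 0, ∀ X, 0 ≤ X → ∀ q, ϖ ≤ M.f₂ X q := by
  obtain ⟨ϖ, hϖ, hle⟩ := M.f₂_inf_pos
  exact ⟨ϖ, hϖ, fun X hX q => (hle q).trans (M.f₂_mono q (mem_Ici.2 le_rfl) hX hX)⟩

theorem f₂_pos (hX : 0 ≤ X) (q : Q) : 0 < M.f₂ X q := by
  obtain ⟨ϖ, hϖ, hle⟩ := M.exists_pos_le_f₂
  exact hϖ.trans_le (hle X hX q)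

theorem growth_eq (hX : 0 ≤ X) (q : Q) : M.growth X q = M.f₂ X q * (M.R X q - 1) := by
  rw [growth, R, mul_sub, mul_div_cancel₀ _ (M.f₂_pos hX q).ne', mul_one]

theorem R_antitoneOn (q : Q) : AntitoneOn (fun X => M.R X q) (Ici 0) := fun X hX _ hY hXY =>
  div_le_div₀ (M.f₁_nonneg X q) (M.f₁_anti q hX hY hXY) (M.f₂_pos hX q) (M.f₂_mono q hX hY hXY)

theorem continuousAt_R (hX : 0 ≤ X) (q : Q) : ContinuousAt (fun Y => M.R Y q) X :=
  ((M.continuous_f₁.comp (continuous_id.prodMk continuous_const)).continuousAt.div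
    (M.continuous_f₂.comp (continuous_id.prodMk continuous_const)).continuousAt
    (M.f₂_pos hX q).ne')

theorem continuous_R_zero : Continuous (M.R 0) :=
  (M.f₁_cont 0).div (M.f₂_cont 0) fun q => (M.f₂_pos le_rfl q).ne'

theorem growth_nonpos (hX : 0 ≤ X) (h : M.R X q ≤ 1) : M.growth X q ≤ 0 := by
  rw [M.growth_eq hX]
  exact mul_nonpos_of_nonneg_of_nonpos (M.f₂_pos hX q).le (by linarith)

theorem growth_nonneg (hX : 0 ≤ X) (h : 1 ≤ M.R X q) : 0 ≤ M.growth X q := by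
  rw [M.growth_eq hX]
  exact mul_nonneg (M.f₂_pos hX q).le (by linarith)

theorem growth_pos (hX : 0 ≤ X) (h : 1 < M.R X q) : 0 < M.growth X q := by
  rw [M.growth_eq hX]
  exact mul_pos (M.f₂_pos hX q) (by linarith)

theorem exists_pos_growth_le_neg {ω : ℝ} (hω : 0 < ω) :
    ∃ a > 0, ∀ X, 0 ≤ X → ∀ q, M.R X q ≤ 1 - ω → M.growth X q ≤ -a := by
  obtain ⟨ϖ, hϖ, hle⟩ := M.exists_pos_le_f₂
  refine ⟨ω * ϖ, mul_pos hω hϖ, fun X hX q h => ?_⟩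
  rw [M.growth_eq hX]
  nlinarith [hle X hX q]

theorem carCap_nonneg (q : Q) : 0 ≤ M.carCap q := by
  unfold carCap
  split_ifs
  exacts [Real.sInf_nonneg fun _ h => h.1, le_rfl]

theorem carCap_eq_zero (h : M.R 0 q < 1) : M.carCap q = 0 := if_neg (not_le.2 h)

namespace Assumptions

variable {M : EGTRates Q} {𝔔 𝔮 : Q} {Y : ℝ}

theorem R_le_of_R_zero_le (hA : M.Assumptions 𝔔 𝔮) (hY : 0 ≤ Y) {q q' : Q}
    (h : M.R 0 q ≤ M.R 0 q') : M.R Y q ≤ M.R Y q' := by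
  obtain ⟨-, -, -, hcomp, -⟩ := hA
  rcases h.lt_or_eq with h | h
  exacts [((hcomp q' q Y hY).1 h).le, ((hcomp q' q Y hY).2 h.symm).ge]

theorem R_lt_of_R_zero_lt (hA : M.Assumptions 𝔔 𝔮) (hY : 0 ≤ Y) {q q' : Q}
    (h : M.R 0 q < M.R 0 q') : M.R Y q < M.R Y q' :=
  (hA.2.2.2.1 q' q Y hY).1 h

theorem R_le_fittest (hA : M.Assumptions 𝔔 𝔮) (hY : 0 ≤ Y) (q : Q) : M.R Y q ≤ M.R Y 𝔔 :=
  hA.R_le_of_R_zero_le hY (hA.1 q)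

theorem R_carCap_le_one (hA : M.Assumptions 𝔔 𝔮) : M.R (M.carCap 𝔔) 𝔔 ≤ 1 := by
  obtain ⟨-, -, -, -, hK𝔔, -⟩ := hA
  by_cases h₁ : 1 ≤ M.R 0 𝔔
  · exact (hK𝔔 h₁).1.le
  · rw [M.carCap_eq_zero (not_le.1 h₁)]
    exact (not_le.1 h₁).le

theorem R_carCap_eq_one (hA : M.Assumptions 𝔔 𝔮) (hK : 0 < M.carCap 𝔔) :
    M.R (M.carCap 𝔔) 𝔔 = 1 := by
  obtain ⟨-, -, -, -, hK𝔔, -⟩ := hA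
  by_cases h₁ : 1 ≤ M.R 0 𝔔
  · exact (hK𝔔 h₁).1
  · exact absurd (M.carCap_eq_zero (not_le.1 h₁)) hK.ne'

theorem R_lt_one_of_carCap_lt (hA : M.Assumptions 𝔔 𝔮) (h : M.carCap 𝔔 < Y) :
    M.R Y 𝔔 < 1 := by
  obtain ⟨-, -, -, -, hK𝔔, -⟩ := hA
  have hK := M.carCap_nonneg 𝔔
  by_cases h₁ : 1 ≤ M.R 0 𝔔
  · obtain ⟨hRK, huniq⟩ := hK𝔔 h₁
    refine lt_of_le_of_ne (hRK ▸ M.R_antitoneOn 𝔔 hK (hK.trans h.le) h.le) fun hY => ?_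
    exact h.ne' (huniq Y (hK.trans h.le) hY)
  · exact (M.R_antitoneOn 𝔔 (mem_Ici.2 le_rfl) (hK.trans h.le) (hK.trans h.le)).trans_lt
      (not_le.1 h₁)

theorem one_lt_R_of_lt_carCap (hA : M.Assumptions 𝔔 𝔮) (hY : 0 ≤ Y) (h : Y < M.carCap 𝔔) :
    1 < M.R Y 𝔔 := by
  obtain ⟨-, -, -, -, hK𝔔, -⟩ := hA
  by_cases h₁ : 1 ≤ M.R 0 𝔔
  · obtain ⟨hRK, huniq⟩ := hK𝔔 h₁
    refine lt_of_le_of_ne (hRK ▸ M.R_antitoneOn 𝔔 hY (hY.trans h.le) h.le) fun hY' => ?_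
    exact h.ne (huniq Y hY hY'.symm)
  · rw [M.carCap_eq_zero (not_le.1 h₁)] at h
    exact absurd hY (not_le.2 h)

theorem exists_pos_le_growth_fittest (hA : M.Assumptions 𝔔 𝔮) {η : ℝ} (hη : 0 < η) :
    ∃ c > 0, ∀ Y ∈ Icc 0 (M.carCap 𝔔 - η), c ≤ M.growth Y 𝔔 :=
  isCompact_Icc.exists_forall_le' (M.continuous_growth_left 𝔔).continuousOn
    fun Y hY => M.growth_pos hY.1 (hA.one_lt_R_of_lt_carCap hY.1 (by linarith [hY.2]))

theorem exists_growth_le_neg_of_isCompact (hA : M.Assumptions 𝔔 𝔮)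
    (hunique : M.fittestClass 𝔔 = {𝔔}) {C : Set Q} (hC : IsCompact C) (h𝔔 : 𝔔 ∉ C) :
    ∃ η > 0, ∃ a > 0, ∀ q ∈ C, ∀ Y, 0 ≤ Y → M.carCap 𝔔 - η ≤ Y → M.growth Y q ≤ -a := by
  rcases C.eq_empty_or_nonempty with rfl | hne
  · exact ⟨1, one_pos, 1, one_pos, fun q hq => hq.elim⟩
  set K := M.carCap 𝔔
  have hK : 0 ≤ K := M.carCap_nonneg 𝔔
  obtain ⟨qC, hqC, hmax⟩ := hC.exists_isMaxOn hne M.continuous_R_zero.continuousOn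
  have hlt : M.R 0 qC < M.R 0 𝔔 := (hA.1 qC).lt_of_ne fun h =>
    h𝔔 (((Set.ext_iff.1 hunique qC).1 h) ▸ hqC)
  have hRK : M.R K qC < 1 := (hA.R_lt_of_R_zero_lt hK hlt).trans_le hA.R_carCap_le_one
  obtain ⟨ω, hω, hRKω⟩ : ∃ ω > 0, M.R K qC < 1 - ω :=
    ⟨(1 - M.R K qC) / 2, by linarith, by linarith⟩
  obtain ⟨ε, hε, hnear⟩ := Metric.eventually_nhds_iff.1
    ((M.continuousAt_R hK qC).eventually (gt_mem_nhds hRKω))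
  obtain ⟨a, ha, hneg⟩ := M.exists_pos_growth_le_neg hω
  refine ⟨ε / 2, half_pos hε, a, ha, fun q hq Y hY hKY => hneg Y hY q ?_⟩
  set Y₀ := max (K - ε / 2) 0
  have hY₀ : dist Y₀ K < ε := by
    rw [Real.dist_eq, abs_lt]
    constructor <;> linarith [le_max_left (K - ε / 2) 0, max_le (by linarith : K - ε / 2 ≤ K) hK]
  calc M.R Y q ≤ M.R Y qC := hA.R_le_of_R_zero_le hY (hmax hq)
    _ ≤ M.R Y₀ qC := M.R_antitoneOn qC (mem_Ici.2 (le_max_right _ _)) hY (max_le hKY hY)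
    _ ≤ 1 - ω := (hnear hY₀).le

end Assumptions

section Compact

variable [CompactSpace Q]

theorem exists_abs_growth_le (B : ℝ) : ∃ G, ∀ Y ∈ Icc 0 B, ∀ q, |M.growth Y q| ≤ G := by
  obtain ⟨G, hG⟩ := (isCompact_Icc.prod isCompact_univ).exists_bound_of_continuousOn
    M.continuous_growth.continuousOn
  exact ⟨G, fun Y hY q => hG (Y, q) ⟨hY, trivial⟩⟩

theorem exists_ball_growth_sub_le (x₀ : Q) (B : ℝ) {δ : ℝ} (hδ : 0 < δ) :
    ∃ ρ > 0, ∀ q ∈ Metric.ball x₀ ρ, ∀ Y ∈ Icc 0 B, M.growth Y x₀ - δ ≤ M.growth Y q := by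
  obtain ⟨ρ, hρ, hunif⟩ := Metric.uniformContinuousOn_iff.1
    ((isCompact_Icc.prod isCompact_univ).uniformContinuousOn_of_continuous
      M.continuous_growth.continuousOn) δ hδ
  refine ⟨ρ, hρ, fun q hq Y hY => ?_⟩
  have := hunif (Y, q) ⟨hY, trivial⟩ (Y, x₀) ⟨hY, trivial⟩ (by simpa [Prod.dist_eq] using hq)
  rw [Function.uncurry_apply_pair, Function.uncurry_apply_pair, Real.dist_eq, abs_lt] at this
  linarith [this.1]

namespace Assumptions

variable {M} {𝔔 𝔮 : Q}

theorem exists_growth_le_of_isCompact (hA : M.Assumptions 𝔔 𝔮)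
    (hunique : M.fittestClass 𝔔 = {𝔔}) {C : Set Q} (hC : IsCompact C) (h𝔔 : 𝔔 ∉ C) (B : ℝ) :
    ∃ a > 0, ∃ k > 0, ∀ Y ∈ Icc 0 B, ∀ q ∈ C,
      M.growth Y q ≤ -a + k * max (M.growth Y 𝔔) 0 := by
  obtain ⟨η, hη, a, ha, hneg⟩ := hA.exists_growth_le_neg_of_isCompact hunique hC h𝔔
  obtain ⟨c, hc, hpos⟩ := hA.exists_pos_le_growth_fittest hη
  obtain ⟨G, hG⟩ := M.exists_abs_growth_le B
  refine ⟨a, ha, (max G 0 + a) / c, by positivity, fun Y hY q hq => ?_⟩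
  rcases le_or_gt (M.carCap 𝔔 - η) Y with hYK | hYK
  · exact (hneg q hq Y hY.1 hYK).trans (le_add_of_nonneg_right (by positivity))
  · calc M.growth Y q ≤ max G 0 := (le_abs_self _).trans ((hG Y hY q).trans (le_max_left _ _))
      _ = -a + (max G 0 + a) / c * c := by rw [div_mul_cancel₀ _ hc.ne']; ring
      _ ≤ -a + (max G 0 + a) / c * max (M.growth Y 𝔔) 0 := by
        gcongr
        exact (hpos Y ⟨hY.1, hYK.le⟩).trans (le_max_left _ _)

end Assumptions

end Compact

end EGTRates

namespace IsPureSelectionSolution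

variable {Q : Type*} [MetricSpace Q] [MeasurableSpace Q] [BorelSpace Q] {M : EGTRates Q}
  {𝔔 𝔮 : Q} {μ : ℝ → Measure Q} {E : Set Q} {a t : ℝ}

theorem continuousOn_measureReal (hμ : IsPureSelectionSolution M μ) (hE : MeasurableSet E)
    (ha : 0 ≤ a) : ContinuousOn (fun s => (μ s).real E) (Ici a) := fun t ht =>
  (hμ.2 t (ha.trans ht) E hE).continuousWithinAt.mono (Ici_subset_Ici.2 ha)

theorem hasDerivWithinAt_measureReal (hμ : IsPureSelectionSolution M μ) (hE : MeasurableSet E)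
    (ht : 0 ≤ t) : HasDerivWithinAt (fun s => (μ s).real E)
      (∫ q in E, M.growth ((μ t).real univ) q ∂μ t) (Ici t) t :=
  (hμ.2 t ht E hE).mono (Ici_subset_Ici.2 ht)

theorem continuousOn_growth_totalMass (hμ : IsPureSelectionSolution M μ) (q : Q) :
    ContinuousOn (fun s => M.growth ((μ s).real univ) q) (Ici 0) :=
  (M.continuous_growth_left q).comp_continuousOn
    (hμ.continuousOn_measureReal MeasurableSet.univ le_rfl)

theorem intervalIntegrable_growth_totalMass (hμ : IsPureSelectionSolution M μ) (q : Q) {b : ℝ}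
    (ha : 0 ≤ a) (hb : 0 ≤ b) :
    IntervalIntegrable (fun s => M.growth ((μ s).real univ) q) volume a b :=
  ((hμ.continuousOn_growth_totalMass q).mono fun _ hs =>
    (le_min ha hb).trans hs.1).intervalIntegrable

variable [CompactSpace Q]

theorem setIntegral_growth_le (hμ : IsPureSelectionSolution M μ) (hE : MeasurableSet E)
    {Y c : ℝ} (h : ∀ q ∈ E, M.growth Y q ≤ c) :
    ∫ q in E, M.growth Y q ∂μ t ≤ c * (μ t).real E := by
  have := hμ.1 t
  have := setIntegral_mono_on ((M.continuous_growth_right Y).integrable_of_hasCompactSupport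
    (.of_compactSpace _)).integrableOn (integrableOn_const (measure_ne_top (μ t) E)) hE h
  rwa [setIntegral_const, smul_eq_mul, mul_comm] at this

theorem le_setIntegral_growth (hμ : IsPureSelectionSolution M μ) (hE : MeasurableSet E)
    {Y c : ℝ} (h : ∀ q ∈ E, c ≤ M.growth Y q) :
    c * (μ t).real E ≤ ∫ q in E, M.growth Y q ∂μ t := by
  have := hμ.1 t
  exact setIntegral_ge_of_const_le_real hE (measure_ne_top _ _) h
    ((M.continuous_growth_right Y).integrable_of_hasCompactSupport
      (.of_compactSpace _)).integrableOn

theorem totalMass_le (hμ : IsPureSelectionSolution M μ) (hA : M.Assumptions 𝔔 𝔮) :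
    ∀ t ∈ Ici 0, (μ t).real univ ≤ max ((μ 0).real univ) (M.carCap 𝔔) :=
  le_max_of_deriv_nonpos_of_lt (hμ.continuousOn_measureReal .univ le_rfl)
    (fun _ ht => hμ.hasDerivWithinAt_measureReal .univ ht) fun _ _ hK =>
    (hμ.setIntegral_growth_le .univ fun q _ => M.growth_nonpos measureReal_nonneg
      ((hA.R_le_fittest measureReal_nonneg q).trans (hA.R_lt_one_of_carCap_lt hK).le)).trans
      (zero_mul _).le

theorem eventually_totalMass_le (hμ : IsPureSelectionSolution M μ) (hA : M.Assumptions 𝔔 𝔮)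
    {ε : ℝ} (hε : 0 < ε) : ∀ᶠ t in atTop, (μ t).real univ ≤ M.carCap 𝔔 + ε := by
  have hK := M.carCap_nonneg 𝔔
  obtain ⟨ω, hω, hRω⟩ : ∃ ω > 0, M.R (M.carCap 𝔔 + ε) 𝔔 ≤ 1 - ω :=
    ⟨1 - M.R (M.carCap 𝔔 + ε) 𝔔,
      sub_pos.2 (hA.R_lt_one_of_carCap_lt (lt_add_of_pos_right _ hε)), by linarith⟩
  obtain ⟨κ, hκ, hneg⟩ := M.exists_pos_growth_le_neg hω
  refine eventually_le_of_deriv_le_neg_mul (a := 0) (hμ.continuousOn_measureReal .univ le_rfl)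
    (fun t ht => hμ.hasDerivWithinAt_measureReal .univ ht) (by linarith) hκ fun t _ hKt => ?_
  refine hμ.setIntegral_growth_le .univ fun q _ => hneg _ measureReal_nonneg q ?_
  calc M.R ((μ t).real univ) q ≤ M.R ((μ t).real univ) 𝔔 :=
        hA.R_le_fittest measureReal_nonneg q
    _ ≤ M.R (M.carCap 𝔔 + ε) 𝔔 :=
        M.R_antitoneOn 𝔔 (mem_Ici.2 (by linarith)) measureReal_nonneg hKt
    _ ≤ 1 - ω := hRω

theorem measureReal_pos (hμ : IsPureSelectionSolution M μ) (hA : M.Assumptions 𝔔 𝔮)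
    (hE : MeasurableSet E) (h₀ : 0 < (μ 0).real E) : ∀ t ∈ Ici 0, 0 < (μ t).real E := by
  obtain ⟨G, hG⟩ := M.exists_abs_growth_le (max ((μ 0).real univ) (M.carCap 𝔔))
  intro t ht
  have := mul_exp_integral_le_of_le_deriv (β := fun _ => -G)
    (hμ.continuousOn_measureReal hE le_rfl) (fun s hs => hμ.hasDerivWithinAt_measureReal hE hs)
    continuousOn_const
    (fun s hs => hμ.le_setIntegral_growth hE fun q _ =>
      neg_le_of_abs_le (hG _ ⟨measureReal_nonneg, hμ.totalMass_le hA s hs⟩ q)) t ht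
  exact (mul_pos h₀ (Real.exp_pos _)).trans_le this

theorem measureReal_ball_pos (hμ : IsPureSelectionSolution M μ) (hA : M.Assumptions 𝔔 𝔮)
    (hsupp : 𝔔 ∈ msupport (μ 0)) {ρ : ℝ} (hρ : 0 < ρ) (ht : 0 ≤ t) :
    0 < (μ t).real (Metric.ball 𝔔 ρ) := by
  have := hμ.1 0
  exact hμ.measureReal_pos hA measurableSet_ball
    (ENNReal.toReal_pos (hsupp ρ hρ).ne' (measure_ne_top _ _)) t ht

theorem integral_growth_fittest_le (hμ : IsPureSelectionSolution M μ) (hA : M.Assumptions 𝔔 𝔮)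
    (hsupp : 𝔔 ∈ msupport (μ 0)) {δ T₀ : ℝ} (hδ : 0 < δ) (hT₀ : 0 ≤ T₀) :
    ∃ C, ∀ t ∈ Ici T₀, ∫ s in T₀..t, M.growth ((μ s).real univ) 𝔔 ≤ δ * (t - T₀) + C := by
  have := hμ.1
  set B := max ((μ 0).real univ) (M.carCap 𝔔)
  obtain ⟨ρ, hρ, hball⟩ := M.exists_ball_growth_sub_le 𝔔 B hδ
  have hU : MeasurableSet (Metric.ball 𝔔 ρ) := measurableSet_ball
  have hu₀ := hμ.measureReal_ball_pos hA hsupp hρ hT₀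
  have hB : ∀ t ∈ Ici T₀, (μ t).real (Metric.ball 𝔔 ρ) ≤ B := fun t ht =>
    (measureReal_mono (subset_univ _)).trans (hμ.totalMass_le hA t (hT₀.trans ht))
  refine ⟨Real.log (B / (μ T₀).real (Metric.ball 𝔔 ρ)), fun t ht => ?_⟩
  -- the mass near `𝔔` grows at least at rate `growth (X, 𝔔) - δ`, but stays below `B`
  have hgrowth := mul_exp_integral_le_of_le_deriv (a := T₀)
    (β := fun s => M.growth ((μ s).real univ) 𝔔 - δ) (hμ.continuousOn_measureReal hU hT₀)
    (fun s hs => hμ.hasDerivWithinAt_measureReal hU (hT₀.trans hs))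
    (((hμ.continuousOn_growth_totalMass 𝔔).mono (Ici_subset_Ici.2 hT₀)).sub continuousOn_const)
    (fun s hs => hμ.le_setIntegral_growth hU fun q hq =>
      hball q hq _ ⟨measureReal_nonneg, hμ.totalMass_le hA s (hT₀.trans hs)⟩) t ht
  rw [intervalIntegral.integral_sub (hμ.intervalIntegrable_growth_totalMass 𝔔 hT₀ (hT₀.trans ht))
    intervalIntegrable_const, intervalIntegral.integral_const, smul_eq_mul] at hgrowth
  have hlog := (Real.le_log_iff_exp_le (div_pos (hu₀.trans_le (hB T₀ self_mem_Ici)) hu₀)).2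
    ((le_div_iff₀ hu₀).2 (by rw [mul_comm]; exact hgrowth.trans (hB t ht)))
  linarith

theorem eventually_neg_le_growth_fittest (hμ : IsPureSelectionSolution M μ)
    (hA : M.Assumptions 𝔔 𝔮) (hK : 0 < M.carCap 𝔔) {δ : ℝ} (hδ : 0 < δ) :
    ∀ᶠ t in atTop, -δ ≤ M.growth ((μ t).real univ) 𝔔 := by
  have hRK := hA.R_carCap_eq_one hK
  have hzero : M.growth (M.carCap 𝔔) 𝔔 = 0 := by
    rw [M.growth_eq hK.le, hRK, sub_self, mul_zero]
  obtain ⟨ε, hε, hnear⟩ := Metric.eventually_nhds_iff.1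
    ((M.continuous_growth_left 𝔔).continuousAt.eventually
      (lt_mem_nhds (by linarith : -δ < M.growth (M.carCap 𝔔) 𝔔)))
  filter_upwards [hμ.eventually_totalMass_le hA (half_pos hε)] with t ht
  rcases le_or_gt ((μ t).real univ) (M.carCap 𝔔) with hle | hgt
  · exact (neg_nonpos.2 hδ.le).trans (M.growth_nonneg measureReal_nonneg
      (hRK ▸ M.R_antitoneOn 𝔔 measureReal_nonneg hK.le hle))
  · exact (hnear (by rw [Real.dist_eq, abs_lt]; constructor <;> linarith)).le

theorem tendsto_measureReal_of_isCompact (hμ : IsPureSelectionSolution M μ)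
    (hA : M.Assumptions 𝔔 𝔮) (hunique : M.fittestClass 𝔔 = {𝔔}) (hsupp : 𝔔 ∈ msupport (μ 0))
    (hK : 0 < M.carCap 𝔔) {C : Set Q} (hC : IsCompact C) (h𝔔 : 𝔔 ∉ C) :
    Tendsto (fun t => (μ t).real C) atTop (𝓝 0) := by
  have := hμ.1
  set φ := fun s => M.growth ((μ s).real univ) 𝔔
  obtain ⟨a, ha, k, hk, hdom⟩ :=
    hA.exists_growth_le_of_isCompact hunique hC h𝔔 (max ((μ 0).real univ) (M.carCap 𝔔))
  set δ := a / (4 * k)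
  have hδ : 0 < δ := by positivity
  have hkδ : k * δ = a / 4 := by rw [mul_div_assoc', mul_comm 4 k, mul_div_mul_left _ _ hk.ne']
  obtain ⟨T₀, hT₀⟩ := eventually_atTop.1
    ((hμ.eventually_neg_le_growth_fittest hA hK hδ).and (eventually_ge_atTop 0))
  have hT₀₀ := (hT₀ T₀ le_rfl).2
  obtain ⟨C', hC'⟩ := hμ.integral_growth_fittest_le hA hsupp hδ hT₀₀
  -- after `T₀`, `max φ 0 ≤ φ + δ`, and the time average of `-a + k (φ + δ)` is `≤ -a / 2`
  have hdecay := le_mul_exp_integral_of_deriv_le (a := T₀) (β := fun s => -a + k * (φ s + δ))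
    (hμ.continuousOn_measureReal hC.isClosed.measurableSet hT₀₀)
    (fun s hs => hμ.hasDerivWithinAt_measureReal hC.isClosed.measurableSet (hT₀₀.trans hs))
    (continuousOn_const.add (continuousOn_const.mul
      (((hμ.continuousOn_growth_totalMass 𝔔).mono (Ici_subset_Ici.2 hT₀₀)).add continuousOn_const)))
    fun s hs => hμ.setIntegral_growth_le hC.isClosed.measurableSet fun q hq =>
      (hdom _ ⟨measureReal_nonneg, hμ.totalMass_le hA s (hT₀₀.trans hs)⟩ q hq).trans
        (by gcongr; exact max_le (by linarith [(hT₀ s hs).1]) (by linarith [(hT₀ s hs).1]))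
  have hint : ∀ t ∈ Ici T₀, ∫ s in T₀..t, -a + k * (φ s + δ) ≤ k * C' - a / 2 * (t - T₀) := by
    intro t ht
    have hφ := hμ.intervalIntegrable_growth_totalMass 𝔔 hT₀₀ (hT₀₀.trans ht)
    simp only [mul_add]
    rw [intervalIntegral.integral_add intervalIntegrable_const
        ((hφ.const_mul k).add intervalIntegrable_const),
      intervalIntegral.integral_add (hφ.const_mul k) intervalIntegrable_const,
      intervalIntegral.integral_const_mul, intervalIntegral.integral_const,
      intervalIntegral.integral_const, smul_eq_mul, smul_eq_mul]
    nlinarith [hC' t ht, show T₀ ≤ t from ht]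
  have hlin : Tendsto (fun t => k * C' - a / 2 * (t - T₀)) atTop atBot := by
    refine (tendsto_atBot_add_const_left _ (k * C' + a / 2 * T₀)
      (tendsto_id.const_mul_atTop_of_neg (neg_lt_zero.2 (half_pos ha)))).congr fun t => ?_
    simp only [id]
    ring
  refine tendsto_of_tendsto_of_tendsto_of_le_of_le' tendsto_const_nhds
    (by simpa using (Real.tendsto_exp_atBot.comp hlin).const_mul ((μ T₀).real C))
    (Eventually.of_forall fun _ => measureReal_nonneg) ?_
  filter_upwards [eventually_ge_atTop T₀] with t ht
  exact (hdecay t ht).trans (by gcongr; exact hint t ht)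

theorem eventually_sub_le_totalMass (hμ : IsPureSelectionSolution M μ) (hA : M.Assumptions 𝔔 𝔮)
    (hunique : M.fittestClass 𝔔 = {𝔔}) (hsupp : 𝔔 ∈ msupport (μ 0)) (hK : 0 < M.carCap 𝔔)
    {ε : ℝ} (hε : 0 < ε) : ∀ᶠ t in atTop, M.carCap 𝔔 - ε ≤ (μ t).real univ := by
  have := hμ.1
  set B := max ((μ 0).real univ) (M.carCap 𝔔)
  obtain ⟨c, hc, hpos⟩ := hA.exists_pos_le_growth_fittest (half_pos hε)
  obtain ⟨ρ, hρ, hball⟩ := M.exists_ball_growth_sub_le 𝔔 B (half_pos hc)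
  have hU : MeasurableSet (Metric.ball 𝔔 ρ) := measurableSet_ball
  obtain ⟨T₁, hT₁⟩ := eventually_atTop.1
    (((hμ.tendsto_measureReal_of_isCompact hA hunique hsupp hK
      Metric.isOpen_ball.isClosed_compl.isCompact (not_not.2 (Metric.mem_ball_self hρ))).eventually
      (ge_mem_nhds (half_pos hε))).and (eventually_ge_atTop 0))
  have hT₁₀ := (hT₁ T₁ le_rfl).2
  -- while the mass near `𝔔` is below `K - ε`, the total mass is below `K - ε / 2`, so that the
  -- mass near `𝔔` grows exponentially at rate `c / 2`
  filter_upwards [eventually_ge_of_mul_le_deriv (a := T₁) (b := M.carCap 𝔔 - ε) (B := B)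
    (hμ.continuousOn_measureReal hU hT₁₀)
    (fun s hs => hμ.hasDerivWithinAt_measureReal hU (hT₁₀.trans hs))
    (fun s hs => hμ.measureReal_ball_pos hA hsupp hρ (hT₁₀.trans hs))
    (fun s hs => (measureReal_mono (subset_univ _)).trans (hμ.totalMass_le hA s (hT₁₀.trans hs)))
    (half_pos hc) fun s hs hsmall => hμ.le_setIntegral_growth hU fun q hq => by
      have hsplit := measureReal_add_measureReal_compl (μ := μ s) hU
      have hX := hpos ((μ s).real univ) ⟨measureReal_nonneg, by linarith [(hT₁ s hs).1]⟩
      linarith [hball q hq _ ⟨measureReal_nonneg, hμ.totalMass_le hA s (hT₁₀.trans hs)⟩]]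
    with t ht
  exact ht.trans (measureReal_mono (subset_univ _))

theorem tendsto_totalMass (hμ : IsPureSelectionSolution M μ) (hA : M.Assumptions 𝔔 𝔮)
    (hunique : M.fittestClass 𝔔 = {𝔔}) (hsupp : 𝔔 ∈ msupport (μ 0)) :
    Tendsto (fun t => (μ t).real univ) atTop (𝓝 (M.carCap 𝔔)) := by
  refine tendsto_order.2 ⟨fun b hb => ?_, fun b hb => ?_⟩
  · rcases (M.carCap_nonneg 𝔔).eq_or_lt with hK | hK
    · exact Eventually.of_forall fun t => hb.trans_le (hK ▸ measureReal_nonneg)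
    · filter_upwards [hμ.eventually_sub_le_totalMass hA hunique hsupp hK
        (half_pos (sub_pos.2 hb))] with t ht
      linarith
  · filter_upwards [hμ.eventually_totalMass_le hA (half_pos (sub_pos.2 hb))] with t ht
    linarith

theorem tendsto_measureReal_compl_ball (hμ : IsPureSelectionSolution M μ)
    (hA : M.Assumptions 𝔔 𝔮) (hunique : M.fittestClass 𝔔 = {𝔔}) (hsupp : 𝔔 ∈ msupport (μ 0))
    {ρ : ℝ} (hρ : 0 < ρ) : Tendsto (fun t => (μ t).real (Metric.ball 𝔔 ρ)ᶜ) atTop (𝓝 0) := by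
  have := hμ.1
  rcases (M.carCap_nonneg 𝔔).eq_or_lt with hK | hK
  · exact squeeze_zero (fun _ => measureReal_nonneg) (fun _ => measureReal_mono (subset_univ _))
      (hK ▸ hμ.tendsto_totalMass hA hunique hsupp)
  · exact hμ.tendsto_measureReal_of_isCompact hA hunique hsupp hK
      Metric.isOpen_ball.isClosed_compl.isCompact (not_not.2 (Metric.mem_ball_self hρ))

end IsPureSelectionSolution

/-- Unique fittest strategy: if `[𝔔]_R = {𝔔}` and `𝔔 ∈ supp(μ(0))`, then
`μ(t) → K_𝔔 δ_𝔔` in the weak* topology. -/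
theorem pureSelection_weakStar_convergence_to_Dirac
    {Q : Type*} [MetricSpace Q] [CompactSpace Q] [MeasurableSpace Q] [BorelSpace Q]
    (M : EGTRates Q) (𝔔 𝔮 : Q) (hA : M.Assumptions 𝔔 𝔮)
    (hunique : M.fittestClass 𝔔 = {𝔔})
    (μ : ℝ → Measure Q) (hμ : IsPureSelectionSolution M μ)
    (hsupp : 𝔔 ∈ msupport (μ 0)) :
    ∀ f : Q → ℝ, Continuous f →
      Filter.Tendsto (fun t => ∫ q, f q ∂(μ t)) Filter.atTop
        (nhds (M.carCap 𝔔 * f 𝔔)) := by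
  intro f hf
  have := hμ.1
  exact tendsto_integral_of_tendsto_measureReal_compl_ball
    (hμ.tendsto_totalMass hA hunique hsupp)
    (fun ρ hρ => hμ.tendsto_measureReal_compl_ball hA hunique hsupp hρ) hf
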